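/- Let (X, μ) be a measure space, let φ : X → ℝ be measurable, let α > 0, and let 0 < δ < 1/2. Then the measure of the super-level set V_α = {x ∈ X : φ(x) ≥ 1 + α} obeys the Chebyshev-type bound α² μ(V_α) ≤ 2 δ² (1−δ)² ∫_X Φ_δ(φ(x)) dμ(x). -/

import Mathlib

open MeasureTheory

/-- The degenerate mobility `M(φ) = φ²(1-φ)²`. -/
noncomputable def M (φ : ℝ) : ℝ := φ ^ 2 * (1 - φ) ^ 2

/-- The truncated (nondegenerate) mobility `M_δ`. -/
noncomputable def Md (δ φ : ℝ) : ℝ :=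
  if φ ≤ δ then M δ else if φ ≤ 1 - δ then M φ else M (1 - δ)

/-- The entropy density with cutoff `Φ_δ(φ) = ∫_{1/2}^{φ} ∫_{1/2}^{s} dr ds / M_δ(r)`. -/
noncomputable def Phid (δ φ : ℝ) : ℝ :=
  ∫ s in (1 / 2 : ℝ)..φ, ∫ r in (1 / 2 : ℝ)..s, 1 / Md δ r

/-!
For `φ ≥ 1` the truncated mobility is the constant `M(1-δ) = δ²(1-δ)²`, so `Φ_δ'' = 1/M(1-δ)`
there, while `Φ_δ(1) ≥ 0` and `Φ_δ'(1) ≥ 0`. Hence `Φ_δ(φ) ≥ (φ-1)²/(2δ²(1-δ)²)` for `φ ≥ 1`,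
which is at least `α²/(2δ²(1-δ)²)` on `{φ ≥ 1 + α}`, and Markov's inequality concludes.
-/

theorem intervalIntegral_le_of_nonneg_of_le {f g : ℝ → ℝ} {a b c : ℝ} (hab : a ≤ b) (hbc : b ≤ c)
    (hfab : IntervalIntegrable f volume a b) (hfbc : IntervalIntegrable f volume b c)
    (hg : IntervalIntegrable g volume b c)
    (hf0 : ∀ x ∈ Set.Icc a b, 0 ≤ f x) (hgf : ∀ x ∈ Set.Icc b c, g x ≤ f x) :
    ∫ x in b..c, g x ≤ ∫ x in a..c, f x := by
  rw [← intervalIntegral.integral_add_adjacent_intervals hfab hfbc]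
  have hleft : 0 ≤ ∫ x in a..b, f x := intervalIntegral.integral_nonneg hab hf0
  have hright : ∫ x in b..c, g x ≤ ∫ x in b..c, f x :=
    intervalIntegral.integral_mono_on hbc hg hfbc hgf
  linarith

theorem M_pos {x : ℝ} (h0 : 0 < x) (h1 : x < 1) : 0 < M x := by
  have : 0 < 1 - x := by linarith
  unfold M; positivity

theorem Md_eq_M_clamp {δ : ℝ} (hδ : δ ≤ 1 / 2) (r : ℝ) :
    Md δ r = M (min (max r δ) (1 - δ)) := by
  unfold Md
  split_ifs with hrδ hrδ'
  · rw [max_eq_right hrδ, min_eq_left (by linarith)]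
  · rw [max_eq_left (le_of_not_ge hrδ), min_eq_left hrδ']
  · rw [max_eq_left (le_of_not_ge hrδ), min_eq_right (le_of_not_ge hrδ')]

theorem continuous_Md {δ : ℝ} (hδ : δ ≤ 1 / 2) : Continuous (Md δ) := by
  have hM : Continuous M := by unfold M; fun_prop
  rw [funext (Md_eq_M_clamp hδ)]
  exact hM.comp ((continuous_id.max continuous_const).min continuous_const)

theorem Md_pos {δ : ℝ} (hδ0 : 0 < δ) (hδ : δ ≤ 1 / 2) (r : ℝ) : 0 < Md δ r := by
  unfold Md
  split_ifs with hrδ hrδ'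
  · exact M_pos hδ0 (by linarith)
  · exact M_pos (by linarith) (by linarith)
  · exact M_pos (by linarith) (by linarith)

theorem Md_of_one_le {δ : ℝ} (hδ0 : 0 < δ) (hδ : δ < 1) {r : ℝ} (hr : 1 ≤ r) :
    Md δ r = M (1 - δ) := by
  unfold Md
  rw [if_neg (by linarith), if_neg (by linarith)]

theorem continuous_one_div_Md {δ : ℝ} (hδ0 : 0 < δ) (hδ : δ ≤ 1 / 2) :
    Continuous fun r => 1 / Md δ r :=
  continuous_const.div (continuous_Md hδ) fun r => (Md_pos hδ0 hδ r).ne'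

theorem continuous_integral_one_div_Md {δ : ℝ} (hδ0 : 0 < δ) (hδ : δ ≤ 1 / 2) :
    Continuous fun s => ∫ r in (1 / 2 : ℝ)..s, 1 / Md δ r :=
  intervalIntegral.continuous_primitive
    (fun _ _ => (continuous_one_div_Md hδ0 hδ).intervalIntegrable _ _) _

theorem continuous_Phid {δ : ℝ} (hδ0 : 0 < δ) (hδ : δ ≤ 1 / 2) : Continuous (Phid δ) :=
  intervalIntegral.continuous_primitive
    (fun _ _ => (continuous_integral_one_div_Md hδ0 hδ).intervalIntegrable _ _) _

theorem integral_one_div_Md_ge {δ : ℝ} (hδ0 : 0 < δ) (hδ : δ ≤ 1 / 2) {s : ℝ} (hs : 1 ≤ s) :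
    (s - 1) / M (1 - δ) ≤ ∫ r in (1 / 2 : ℝ)..s, 1 / Md δ r := by
  have hconst : (s - 1) / M (1 - δ) = ∫ _ in (1 : ℝ)..s, 1 / M (1 - δ) := by
    simp only [intervalIntegral.integral_const, smul_eq_mul]
    ring
  have hg := continuous_one_div_Md hδ0 hδ
  rw [hconst]
  refine intervalIntegral_le_of_nonneg_of_le (by norm_num) hs (hg.intervalIntegrable _ _)
    (hg.intervalIntegrable _ _) intervalIntegrable_const
    (fun r _ => (one_div_pos.2 (Md_pos hδ0 hδ r)).le) fun r hr => ?_
  rw [Md_of_one_le hδ0 (by linarith) hr.1]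

theorem Phid_ge {δ : ℝ} (hδ0 : 0 < δ) (hδ : δ ≤ 1 / 2) {u : ℝ} (hu : 1 ≤ u) :
    (u - 1) ^ 2 / (2 * M (1 - δ)) ≤ Phid δ u := by
  have hquad : (u - 1) ^ 2 / (2 * M (1 - δ)) = ∫ s in (1 : ℝ)..u, (s - 1) / M (1 - δ) := by
    rw [intervalIntegral.integral_div, intervalIntegral.integral_comp_sub_right fun s => s]
    simp only [sub_self, integral_id]
    ring
  have hF := continuous_integral_one_div_Md hδ0 hδ
  rw [hquad]
  have hlin : Continuous fun s : ℝ => (s - 1) / M (1 - δ) := by fun_prop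
  refine intervalIntegral_le_of_nonneg_of_le (by norm_num) hu (hF.intervalIntegrable _ _)
    (hF.intervalIntegrable _ _) (hlin.intervalIntegrable _ _) (fun s hs => ?_)
    fun s hs => integral_one_div_Md_ge hδ0 hδ hs.1
  exact intervalIntegral.integral_nonneg hs.1 fun r _ => (one_div_pos.2 (Md_pos hδ0 hδ r)).le

/-- Chebyshev-type bound for the measure of the super-level set `{φ ≥ 1 + α}`. -/
theorem superlevel_set_chebyshev_bound {X : Type*} [MeasurableSpace X] (μ : Measure X)
    (φ : X → ℝ) (hφ : Measurable φ) (α : ℝ) (hα : 0 < α)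
    (δ : ℝ) (hδ0 : 0 < δ) (hδ : δ < 1 / 2) :
    ENNReal.ofReal (α ^ 2) * μ {x | 1 + α ≤ φ x}
      ≤ ENNReal.ofReal (2 * δ ^ 2 * (1 - δ) ^ 2)
        * ∫⁻ x, ENNReal.ofReal (Phid δ (φ x)) ∂μ := by
  have hM : 2 * δ ^ 2 * (1 - δ) ^ 2 = 2 * M (1 - δ) := by unfold M; ring
  have hM0 : 0 < 2 * M (1 - δ) := mul_pos two_pos (M_pos (by linarith) (by linarith))
  have hmeas : Measurable fun x => ENNReal.ofReal (2 * M (1 - δ) * Phid δ (φ x)) :=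
    ENNReal.measurable_ofReal.comp
      (measurable_const.mul ((continuous_Phid hδ0 hδ.le).measurable.comp hφ))
  have hsub : {x | 1 + α ≤ φ x} ⊆
      {x | ENNReal.ofReal (α ^ 2) ≤ ENNReal.ofReal (2 * M (1 - δ) * Phid δ (φ x))} := by
    intro x (hx : 1 + α ≤ φ x)
    have hPhi := Phid_ge hδ0 hδ.le (u := φ x) (by linarith)
    rw [div_le_iff₀' hM0] at hPhi
    have hα2 : α ^ 2 ≤ (φ x - 1) ^ 2 := pow_le_pow_left₀ hα.le (by linarith) 2
    exact ENNReal.ofReal_le_ofReal (hα2.trans hPhi)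
  calc ENNReal.ofReal (α ^ 2) * μ {x | 1 + α ≤ φ x}
      ≤ ∫⁻ x, ENNReal.ofReal (2 * M (1 - δ) * Phid δ (φ x)) ∂μ :=
        (mul_le_mul_right (measure_mono hsub) _).trans (mul_meas_ge_le_lintegral hmeas _)
    _ = ENNReal.ofReal (2 * δ ^ 2 * (1 - δ) ^ 2) * ∫⁻ x, ENNReal.ofReal (Phid δ (φ x)) ∂μ := by
        simp only [ENNReal.ofReal_mul hM0.le, hM]
        exact lintegral_const_mul' _ _ ENNReal.ofReal_ne_top
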